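/- arXiv:1409.6245 — 6 statements merged into one kernel-verified Lean document; each statement's English description precedes it below -/
import Mathlib

section
/- If a symmetric block matrix D = [[R, B], [B^T, C]] with invertible block C has exactly one negative eigenvalue and all other eigenvalues positive, and if the Schur complement D_cg = R - B C^{-1} B^T has a negative eigenvalue, then C is positive definite. -/
/-!
A symmetric form that is positive semidefinite on a hyperplane (here: the orthogonal complement
of the negative eigenvector of `D`) is nonnegative on the `D`-orthogonal complement of any vector
`v` with `vᵀ D v < 0`. For a Schur eigenvector `w` with eigenvalue `μ < 0`, the vector
`v = (w, -C⁻¹ Bᵀ w)` satisfies `D v = (μ w, 0)`, so `vᵀ D v = μ |w|² < 0` and every `(0, x)` is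
`D`-orthogonal to `v`; hence `xᵀ C x ≥ 0`, and the invertible `C` is positive definite.
-/

open Matrix

namespace LinearMap.BilinForm

variable {𝕜 M : Type*} [Field 𝕜] [LinearOrder 𝕜] [IsStrictOrderedRing 𝕜]
  [AddCommGroup M] [Module 𝕜 M]

theorem apply_self_nonneg_of_apply_eq_zero_of_neg {f : LinearMap.BilinForm 𝕜 M} (hf : f.IsSymm)
    (ℓ : Module.Dual 𝕜 M) (hℓ : ∀ x, ℓ x = 0 → 0 ≤ f x x) {u v : M}
    (hv : f v v < 0) (huv : f u v = 0) : 0 ≤ f u u := by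
  by_cases hu : ℓ u = 0
  · exact hℓ u hu
  -- `t` is chosen so that `v - t • u` lies in the hyperplane `ker ℓ`.
  set t := ℓ v / ℓ u
  have hvu : f v u = 0 := by rw [hf.eq, huv]
  have hker : ℓ (v - t • u) = 0 := by simp [t, hu]
  have hexpand : f (v - t • u) (v - t • u) = f v v + t * t * f u u := by
    simp only [map_sub, map_smul, LinearMap.sub_apply, LinearMap.smul_apply, smul_eq_mul, hvu,
      huv]
    ring
  have hnonneg := hℓ _ hker
  rw [hexpand] at hnonneg
  nlinarith [mul_self_nonneg t]

end LinearMap.BilinForm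

namespace Matrix
variable {n : Type*} [Fintype n] [DecidableEq n]

theorem IsHermitian.dotProduct_mulVec_self_eq_sum {D : Matrix n n ℝ} (hD : D.IsHermitian)
    (x : n → ℝ) :
    x ⬝ᵥ D *ᵥ x =
      ∑ j, hD.eigenvalues j * (star (hD.eigenvectorUnitary : Matrix n n ℝ) *ᵥ x) j ^ 2 := by
  set U : Matrix n n ℝ := (hD.eigenvectorUnitary : Matrix n n ℝ)
  have hxU : x ᵥ* U = star U *ᵥ x := by
    rw [star_eq_conjTranspose, conjTranspose_eq_transpose_of_trivial, mulVec_transpose]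
  conv_lhs => rw [hD.spectral_theorem, Unitary.conjStarAlgAut_apply]
  rw [← mulVec_mulVec, ← mulVec_mulVec, dotProduct_mulVec, hxU]
  simp only [dotProduct, mulVec_diagonal, Function.comp_apply, RCLike.ofReal_real_eq_id, id]
  exact Finset.sum_congr rfl fun j _ => by ring

theorem IsHermitian.dotProduct_mulVec_self_nonneg_of_eigencoord_eq_zero {D : Matrix n n ℝ}
    (hD : D.IsHermitian) {i : n} (hpos : ∀ j, j ≠ i → 0 < hD.eigenvalues j) {x : n → ℝ}
    (hx : (star (hD.eigenvectorUnitary : Matrix n n ℝ) *ᵥ x) i = 0) :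
    0 ≤ x ⬝ᵥ D *ᵥ x := by
  rw [hD.dotProduct_mulVec_self_eq_sum]
  refine Finset.sum_nonneg fun j _ => ?_
  obtain rfl | hj := eq_or_ne j i
  · simp [hx]
  · exact mul_nonneg (hpos j hj).le (sq_nonneg _)

theorem IsHermitian.dotProduct_mulVec_self_nonneg_of_orthogonal_of_neg {D : Matrix n n ℝ}
    (hD : D.IsHermitian) {i : n} (hpos : ∀ j, j ≠ i → 0 < hD.eigenvalues j) {u v : n → ℝ}
    (hv : v ⬝ᵥ D *ᵥ v < 0) (huv : u ⬝ᵥ D *ᵥ v = 0) : 0 ≤ u ⬝ᵥ D *ᵥ u := by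
  simp only [← toBilin'_apply'] at hv huv ⊢
  refine LinearMap.BilinForm.apply_self_nonneg_of_apply_eq_zero_of_neg
    (isSymm_toBilin'_iff_isSymm.mpr (isHermitian_iff_isSymm.mp hD))
    (LinearMap.proj i ∘ₗ (star (hD.eigenvectorUnitary : Matrix n n ℝ)).mulVecLin)
    (fun x hx => ?_) hv huv
  rw [toBilin'_apply']
  exact hD.dotProduct_mulVec_self_nonneg_of_eigencoord_eq_zero hpos hx

theorem fromBlocks_mulVec_sumElim_neg_inv_mul_mulVec {l m α : Type*} [Fintype l] [Fintype m]
    [DecidableEq m] [CommRing α] (A : Matrix l l α) (B : Matrix l m α) (C : Matrix m l α)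
    (D : Matrix m m α) (hD : IsUnit D.det) (w : l → α) :
    fromBlocks A B C D *ᵥ Sum.elim w (-(D⁻¹ * C) *ᵥ w) =
      Sum.elim ((A - B * D⁻¹ * C) *ᵥ w) 0 := by
  rw [fromBlocks_mulVec, Sum.elim_comp_inl, Sum.elim_comp_inr, neg_mulVec,
    mulVec_neg, mulVec_neg, mulVec_mulVec, mulVec_mulVec, ← Matrix.mul_assoc, ← Matrix.mul_assoc,
    mul_nonsing_inv _ hD, Matrix.one_mul, add_neg_cancel, sub_mulVec, sub_eq_add_neg]

end Matrix

/-- If the symmetric block matrix `D = [[R, B], [Bᵀ, C]]` with invertible `C` has exactly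
one negative eigenvalue (the rest positive), and the Schur complement has a negative
eigenvalue, then `C` is positive definite. -/
theorem posDef_C_of_schur_neg_eigenvalue {nr nc : ℕ}
    (R : Matrix (Fin nr) (Fin nr) ℝ) (B : Matrix (Fin nr) (Fin nc) ℝ)
    (C : Matrix (Fin nc) (Fin nc) ℝ)
    (hD : (Matrix.fromBlocks R B Bᵀ C).IsHermitian)
    (hCinv : IsUnit C.det)
    (hone : ∃ i, hD.eigenvalues i < 0 ∧ ∀ j, j ≠ i → 0 < hD.eigenvalues j)
    (hcg : ∃ μ : ℝ, μ < 0 ∧ ∃ w : Fin nr → ℝ, w ≠ 0 ∧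
      (R - B * C⁻¹ * Bᵀ) *ᵥ w = μ • w) :
    C.PosDef := by
  obtain ⟨i, -, hpos⟩ := hone
  obtain ⟨μ, hμ, w, hw, hschur⟩ := hcg
  set v := Sum.elim w (-(C⁻¹ * Bᵀ) *ᵥ w)
  have hDv : fromBlocks R B Bᵀ C *ᵥ v = Sum.elim (μ • w) 0 := by
    rw [fromBlocks_mulVec_sumElim_neg_inv_mul_mulVec _ _ _ _ hCinv, hschur]
  have hv : v ⬝ᵥ fromBlocks R B Bᵀ C *ᵥ v < 0 := by
    rw [hDv, sumElim_dotProduct_sumElim, dotProduct_zero, add_zero, dotProduct_smul,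
      smul_eq_mul]
    exact mul_neg_of_neg_of_pos hμ (by simpa using dotProduct_star_self_pos_iff.mpr hw)
  have hC : C.PosSemidef := .of_dotProduct_mulVec_nonneg (isHermitian_fromBlocks_iff.mp hD).2.2.2
    fun x => by
      have hx := hD.dotProduct_mulVec_self_nonneg_of_orthogonal_of_neg hpos hv
        (u := Sum.elim 0 x) (by simp [hDv, sumElim_dotProduct_sumElim])
      simpa [fromBlocks_mulVec, sumElim_dotProduct_sumElim] using hx
  exact hC.posDef_iff_isUnit.mpr ((isUnit_iff_isUnit_det C).mpr hCinv)
end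

section
/- If a symmetric block matrix D = [[R, B], [B^T, C]] with invertible C has exactly one negative eigenvalue and the Schur complement D_cg = R - B C^{-1} B^T has a negative eigenvalue, then D_cg has exactly one negative eigenvalue and all its other eigenvalues are positive. -/
/-!
With `P = [1; -C⁻¹Bᵀ]` one has `Pᵀ D P = D_cg`, so the quadratic form of `D_cg` is that of `D`
pulled back along `P`. Two negative eigenvalues of `D_cg` would give a plane on which `D_cg`, hence
`D ∘ P`, is negative definite; but `D` is positive semidefinite on the hyperplane orthogonal to its
negative eigenvector, and some nonzero vector of the plane is mapped into that hyperplane.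
The determinant formula `det D = det C * det D_cg` excludes zero eigenvalues of `D_cg`, and the
given eigenvector supplies a negative one.
-/

open Matrix

namespace Matrix

theorem fromBlocks_mul_fromRows_one_neg {m n α : Type*} [Fintype m] [Fintype n] [DecidableEq m]
    [DecidableEq n] [CommRing α] (A : Matrix m m α) (B : Matrix m n α) (C : Matrix n m α)
    {D : Matrix n n α} (hD : IsUnit D.det) :
    fromBlocks A B C D * fromRows (1 : Matrix m m α) (-(D⁻¹ * C)) =
      fromRows (A - B * D⁻¹ * C) 0 := by
  rw [fromBlocks_mul_fromRows, Matrix.mul_neg, Matrix.mul_neg, ← Matrix.mul_assoc,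
    ← Matrix.mul_assoc, mul_nonsing_inv D hD, Matrix.one_mul, Matrix.mul_one, Matrix.mul_one,
    ← sub_eq_add_neg, add_neg_cancel]

theorem transpose_mul_fromBlocks_mul_eq_schur {m n α : Type*} [Fintype m] [Fintype n]
    [DecidableEq m] [DecidableEq n] [CommRing α] (A : Matrix m m α) (B : Matrix m n α)
    (C : Matrix n m α) {D : Matrix n n α} (hD : IsUnit D.det) (Y : Matrix n m α) :
    (fromRows (1 : Matrix m m α) Y)ᵀ * fromBlocks A B C D *
      fromRows (1 : Matrix m m α) (-(D⁻¹ * C)) = A - B * D⁻¹ * C := by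
  rw [Matrix.mul_assoc, fromBlocks_mul_fromRows_one_neg A B C hD, transpose_fromRows,
    fromCols_mul_fromRows, transpose_one, Matrix.one_mul, Matrix.mul_zero, add_zero]

theorem dotProduct_mulVec_transpose_mul_mul {m n α : Type*} [Fintype m] [Fintype n]
    [CommSemiring α] (A : Matrix m m α) (P : Matrix m n α) (x : n → α) :
    (P *ᵥ x) ⬝ᵥ (A *ᵥ (P *ᵥ x)) = x ⬝ᵥ ((Pᵀ * A * P) *ᵥ x) := by
  rw [← mulVec_mulVec, ← mulVec_mulVec, dotProduct_mulVec x, vecMul_transpose]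

namespace IsHermitian

variable {n : Type*} [Fintype n] [DecidableEq n] {A : Matrix n n ℝ} (hA : A.IsHermitian)

theorem dotProduct_mulVec_eq_sum_eigenvalues (x : n → ℝ) :
    x ⬝ᵥ (A *ᵥ x) = ∑ k, hA.eigenvalues k * (⇑(hA.eigenvectorBasis k) ⬝ᵥ x) ^ 2 := by
  set U : Matrix n n ℝ := ↑hA.eigenvectorUnitary
  have hAx : A *ᵥ x = U *ᵥ (diagonal hA.eigenvalues *ᵥ (Uᵀ *ᵥ x)) := by
    rw [mulVec_mulVec, mulVec_mulVec, ← conjTranspose_eq_transpose_of_trivial,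
      ← star_eq_conjTranspose]
    conv_lhs => rw [hA.spectral_theorem]
    simp [U]
  have hcoord (k : n) : (Uᵀ *ᵥ x) k = ⇑(hA.eigenvectorBasis k) ⬝ᵥ x := rfl
  calc x ⬝ᵥ (A *ᵥ x) = (Uᵀ *ᵥ x) ⬝ᵥ (diagonal hA.eigenvalues *ᵥ (Uᵀ *ᵥ x)) := by
        rw [hAx, dotProduct_mulVec, mulVec_transpose]
    _ = _ := by
        simp only [mulVec_diagonal, dotProduct, hcoord]
        exact Finset.sum_congr rfl fun k _ => by ring

theorem eigenvectorBasis_dotProduct (k l : n) :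
    ⇑(hA.eigenvectorBasis k) ⬝ᵥ ⇑(hA.eigenvectorBasis l) = if k = l then 1 else 0 := by
  have := orthonormal_iff_ite.mp hA.eigenvectorBasis.orthonormal l k
  rw [EuclideanSpace.inner_eq_star_dotProduct] at this
  simpa [eq_comm] using this

theorem exists_eigenvalues_eq_of_mulVec_eq_smul {μ : ℝ} {w : n → ℝ} (hw : w ≠ 0)
    (hAw : A *ᵥ w = μ • w) : ∃ i, hA.eigenvalues i = μ := by
  have : μ ∈ spectrum ℝ A := by
    rw [← spectrum_toLin']
    exact (Module.End.hasEigenvalue_of_hasEigenvector ⟨by simpa using hAw, hw⟩).mem_spectrum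
  simpa [hA.spectrum_real_eq_range_eigenvalues] using this

theorem det_ne_zero_iff : A.det ≠ 0 ↔ ∀ i, hA.eigenvalues i ≠ 0 := by
  simp [hA.det_eq_prod_eigenvalues, Finset.prod_ne_zero_iff]

theorem exists_dotProduct_mulVec_nonneg {i₀ : n} (h : ∀ k ≠ i₀, 0 ≤ hA.eigenvalues k)
    (x y : n → ℝ) :
    ∃ a b : ℝ, (a ≠ 0 ∨ b ≠ 0) ∧ 0 ≤ (a • x + b • y) ⬝ᵥ (A *ᵥ (a • x + b • y)) := by
  set v := ⇑(hA.eigenvectorBasis i₀)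
  obtain ⟨a, b, hab, horth⟩ :
      ∃ a b : ℝ, (a ≠ 0 ∨ b ≠ 0) ∧ a * (v ⬝ᵥ x) + b * (v ⬝ᵥ y) = 0 := by
    by_cases hx : v ⬝ᵥ x = 0
    · exact ⟨1, 0, by simp, by simp [hx]⟩
    · exact ⟨v ⬝ᵥ y, -(v ⬝ᵥ x), Or.inr (neg_ne_zero.mpr hx), by ring⟩
  refine ⟨a, b, hab, ?_⟩
  rw [hA.dotProduct_mulVec_eq_sum_eigenvalues]
  refine Finset.sum_nonneg fun k _ => ?_
  rcases eq_or_ne k i₀ with rfl | hk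
  · simp [v, dotProduct_add, dotProduct_smul, horth]
  · exact mul_nonneg (h k hk) (sq_nonneg _)

theorem dotProduct_mulVec_neg_of_eigenvalues_neg {i j : n} (hij : i ≠ j)
    (hi : hA.eigenvalues i < 0) (hj : hA.eigenvalues j < 0) {a b : ℝ} (hab : a ≠ 0 ∨ b ≠ 0) :
    (a • ⇑(hA.eigenvectorBasis i) + b • ⇑(hA.eigenvectorBasis j)) ⬝ᵥ
      (A *ᵥ (a • ⇑(hA.eigenvectorBasis i) + b • ⇑(hA.eigenvectorBasis j))) < 0 := by
  have hform : (a • ⇑(hA.eigenvectorBasis i) + b • ⇑(hA.eigenvectorBasis j)) ⬝ᵥ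
      (A *ᵥ (a • ⇑(hA.eigenvectorBasis i) + b • ⇑(hA.eigenvectorBasis j))) =
      hA.eigenvalues i * a ^ 2 + hA.eigenvalues j * b ^ 2 := by
    simp only [mulVec_add, mulVec_smul, mulVec_eigenvectorBasis, add_dotProduct, dotProduct_add,
      smul_dotProduct, dotProduct_smul, eigenvectorBasis_dotProduct, hij, hij.symm, if_true,
      if_false, smul_eq_mul]
    ring
  rw [hform]
  rcases hab with ha | hb
  · nlinarith [sq_pos_of_ne_zero ha, sq_nonneg b]
  · nlinarith [sq_pos_of_ne_zero hb, sq_nonneg a]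

theorem eq_of_eigenvalues_neg_of_transpose_mul_mul_eq {m : Type*} [Fintype m] [DecidableEq m]
    {D : Matrix m m ℝ} (hD : D.IsHermitian) {i₀ : m} (hD₀ : ∀ k ≠ i₀, 0 ≤ hD.eigenvalues k)
    (P : Matrix m n ℝ) (hPA : Pᵀ * D * P = A) {i j : n} (hi : hA.eigenvalues i < 0)
    (hj : hA.eigenvalues j < 0) : i = j := by
  by_contra hij
  obtain ⟨a, b, hab, hnonneg⟩ := hD.exists_dotProduct_mulVec_nonneg hD₀
    (P *ᵥ ⇑(hA.eigenvectorBasis i)) (P *ᵥ ⇑(hA.eigenvectorBasis j))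
  rw [← mulVec_smul, ← mulVec_smul, ← mulVec_add, dotProduct_mulVec_transpose_mul_mul, hPA]
    at hnonneg
  exact (hA.dotProduct_mulVec_neg_of_eigenvalues_neg hij hi hj hab).not_ge hnonneg

end IsHermitian

end Matrix

/-- If the symmetric block matrix `D` with invertible `C` has exactly one negative
eigenvalue and the Schur complement `D_cg` has a negative eigenvalue, then `D_cg` has
exactly one negative eigenvalue and all its other eigenvalues are positive. -/
theorem schur_exactly_one_neg_eigenvalue {nr nc : ℕ}
    (R : Matrix (Fin nr) (Fin nr) ℝ) (B : Matrix (Fin nr) (Fin nc) ℝ)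
    (C : Matrix (Fin nc) (Fin nc) ℝ)
    (hD : (Matrix.fromBlocks R B Bᵀ C).IsHermitian)
    (hCinv : IsUnit C.det)
    (hDcg : (R - B * C⁻¹ * Bᵀ).IsHermitian)
    (hone : ∃ i, hD.eigenvalues i < 0 ∧ ∀ j, j ≠ i → 0 < hD.eigenvalues j)
    (hcg : ∃ μ : ℝ, μ < 0 ∧ ∃ w : Fin nr → ℝ, w ≠ 0 ∧
      (R - B * C⁻¹ * Bᵀ) *ᵥ w = μ • w) :
    ∃ i, hDcg.eigenvalues i < 0 ∧ ∀ j, j ≠ i → 0 < hDcg.eigenvalues j := by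
  obtain ⟨i₀, hi₀, hpos⟩ := hone
  obtain ⟨μ, hμ, w, hw, hSw⟩ := hcg
  have hunique {i j : Fin nr} : hDcg.eigenvalues i < 0 → hDcg.eigenvalues j < 0 → i = j :=
    hDcg.eq_of_eigenvalues_neg_of_transpose_mul_mul_eq hD (fun k hk => (hpos k hk).le) _
      (transpose_mul_fromBlocks_mul_eq_schur R B Bᵀ hCinv _)
  have hne : ∀ k, hDcg.eigenvalues k ≠ 0 := by
    have hdetD : (fromBlocks R B Bᵀ C).det ≠ 0 := hD.det_ne_zero_iff.mpr fun k => by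
      rcases eq_or_ne k i₀ with rfl | hk
      exacts [hi₀.ne, (hpos k hk).ne']
    have := C.invertibleOfIsUnitDet hCinv
    rw [det_fromBlocks₂₂, invOf_eq_nonsing_inv] at hdetD
    exact hDcg.det_ne_zero_iff.mp (right_ne_zero_of_mul hdetD)
  obtain ⟨i, hi⟩ := hDcg.exists_eigenvalues_eq_of_mulVec_eq_smul hw hSw
  have hneg : hDcg.eigenvalues i < 0 := hi ▸ hμ
  exact ⟨i, hneg, fun j hj => (hne j).lt_or_gt.resolve_left fun hj' => hj (hunique hj' hneg)⟩
end

section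
/- Under the standing assumptions (D symmetric with exactly one negative eigenvalue λ_at, C invertible, D_cg = R - B C^{-1} B^T has a negative eigenvalue λ_cg), the negative eigenvalue of the Schur complement satisfies |λ_cg| ≥ |λ_at|, i.e., λ_cg ≤ λ_at < 0. -/
/-!
If `(R - B C⁻¹ Bᵀ) w = λ_cg w`, the vector `u = (w, -C⁻¹ Bᵀ w)` satisfies `D u = (λ_cg w, 0)`.
Every eigenvalue `μ` of `D` is `λ_at` or positive, so `μ (μ - λ_at) ≥ 0` (as `λ_at < 0`) and
`D (D - λ_at)` is positive semidefinite, i.e. `λ_at ⟪u, D u⟫ ≤ ‖D u‖²`. At our `u` this reads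
`λ_at λ_cg ‖w‖² ≤ λ_cg² ‖w‖²`, and dividing by `λ_cg ‖w‖² < 0` gives `λ_cg ≤ λ_at`.
-/

open Matrix
open scoped MatrixOrder

namespace Matrix

variable {n : Type*} [Fintype n] [DecidableEq n]

theorem exists_mulVec_eq_smul_of_mem_spectrum {K : Type*} [Field K] {A : Matrix n n K} {μ : K}
    (hμ : μ ∈ spectrum K A) : ∃ u : n → K, u ≠ 0 ∧ A *ᵥ u = μ • u := by
  rw [← spectrum_toLin', ← Module.End.hasEigenvalue_iff_mem_spectrum] at hμ
  obtain ⟨u, hu⟩ := hμ.exists_hasEigenvector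
  exact ⟨u, hu.2, by simpa using hu.apply_eq_smul⟩

theorem IsHermitian.posSemidef_mul_sub_smul_one {A : Matrix n n ℝ} (hA : A.IsHermitian) {c : ℝ}
    (h : ∀ μ ∈ spectrum ℝ A, 0 ≤ μ * (μ - c)) : (A * (A - c • 1)).PosSemidef := by
  have hA' : IsSelfAdjoint A := hA
  rw [← nonneg_iff_posSemidef]
  have hcfc : cfc (fun μ => μ * (μ - c)) A = A * (A - c • 1) := by
    rw [cfc_mul _ _ A, cfc_sub _ _ A, cfc_id' ℝ A, cfc_const c A, Algebra.algebraMap_eq_smul_one]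
  rw [← hcfc]
  exact cfc_nonneg h

theorem IsHermitian.mul_dotProduct_mulVec_le {A : Matrix n n ℝ} (hA : A.IsHermitian) {c : ℝ}
    (h : ∀ μ ∈ spectrum ℝ A, 0 ≤ μ * (μ - c)) (u : n → ℝ) :
    c * (u ⬝ᵥ A *ᵥ u) ≤ A *ᵥ u ⬝ᵥ A *ᵥ u := by
  have hnonneg := (hA.posSemidef_mul_sub_smul_one h).dotProduct_mulVec_nonneg u
  have hAT : Aᵀ = A := by simpa using hA.eq
  rw [star_trivial, ← mulVec_mulVec, dotProduct_mulVec, ← mulVec_transpose, hAT, sub_mulVec,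
    dotProduct_sub, smul_mulVec, one_mulVec, dotProduct_smul, smul_eq_mul,
    dotProduct_comm (A *ᵥ u) u] at hnonneg
  linarith

theorem fromBlocks_mulVec_sumElim_neg_inv_mul {m R : Type*} [Fintype m] [CommRing R]
    (A : Matrix m m R) (B : Matrix m n R) (C : Matrix n m R) (D : Matrix n n R)
    (hD : IsUnit D.det) (w : m → R) :
    fromBlocks A B C D *ᵥ Sum.elim w (-(D⁻¹ * C) *ᵥ w) = Sum.elim ((A - B * D⁻¹ * C) *ᵥ w) 0 := by
  have hDv : D *ᵥ (-(D⁻¹ * C) *ᵥ w) = -(C *ᵥ w) := by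
    rw [mulVec_mulVec, Matrix.mul_neg, ← Matrix.mul_assoc, mul_nonsing_inv D hD, Matrix.one_mul,
      neg_mulVec]
  rw [fromBlocks_mulVec, Sum.elim_comp_inl, Sum.elim_comp_inr, hDv, add_neg_cancel, sub_mulVec,
    mulVec_mulVec, Matrix.mul_neg, Matrix.mul_assoc, neg_mulVec, sub_eq_add_neg]

end Matrix

theorem schur_neg_eigenvalue_le_general {nr nc : ℕ}
    (R : Matrix (Fin nr) (Fin nr) ℝ) (B : Matrix (Fin nr) (Fin nc) ℝ)
    (C : Matrix (Fin nc) (Fin nc) ℝ)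
    (hD : (Matrix.fromBlocks R B Bᵀ C).IsHermitian)
    (hCinv : IsUnit C.det)
    (lamAt lamCg : ℝ)
    (hAtNeg : lamAt < 0)
    (hAtOnly : ∀ (μ : ℝ) (u : Fin nr ⊕ Fin nc → ℝ), u ≠ 0 →
      (Matrix.fromBlocks R B Bᵀ C) *ᵥ u = μ • u → μ = lamAt ∨ 0 < μ)
    (hCgNeg : lamCg < 0)
    (hCgEig : ∃ w : Fin nr → ℝ, w ≠ 0 ∧ (R - B * C⁻¹ * Bᵀ) *ᵥ w = lamCg • w) :
    lamCg ≤ lamAt ∧ lamAt < 0 := by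
  obtain ⟨w, hw0, hw⟩ := hCgEig
  have hspec : ∀ μ ∈ spectrum ℝ (fromBlocks R B Bᵀ C), 0 ≤ μ * (μ - lamAt) := fun μ hμ => by
    obtain ⟨u, hu0, hu⟩ := exists_mulVec_eq_smul_of_mem_spectrum hμ
    rcases hAtOnly μ u hu0 hu with rfl | hμpos
    · simp
    · nlinarith
  have key := hD.mul_dotProduct_mulVec_le hspec (Sum.elim w (-(C⁻¹ * Bᵀ) *ᵥ w))
  rw [fromBlocks_mulVec_sumElim_neg_inv_mul R B Bᵀ C hCinv, hw] at key
  simp only [sumElim_dotProduct_sumElim, dotProduct_zero, add_zero, dotProduct_smul,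
    smul_dotProduct, smul_eq_mul] at key
  have hww : 0 < w ⬝ᵥ w := by simpa using dotProduct_star_self_pos_iff.mpr hw0
  have hmul : lamAt * lamCg ≤ lamCg * lamCg := le_of_mul_le_mul_right (by linarith) hww
  exact ⟨by nlinarith, hAtNeg⟩

/-- The negative eigenvalue of the Schur complement satisfies `|λ_cg| ≥ |λ_at|`,
i.e. `λ_cg ≤ λ_at < 0`. -/
theorem schur_neg_eigenvalue_le {nr nc : ℕ}
    (R : Matrix (Fin nr) (Fin nr) ℝ) (B : Matrix (Fin nr) (Fin nc) ℝ)
    (C : Matrix (Fin nc) (Fin nc) ℝ)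
    (hD : (Matrix.fromBlocks R B Bᵀ C).IsHermitian)
    (hCinv : IsUnit C.det)
    (lamAt lamCg : ℝ)
    (hAtNeg : lamAt < 0)
    (hAtEig : ∃ u : Fin nr ⊕ Fin nc → ℝ, u ≠ 0 ∧
      (Matrix.fromBlocks R B Bᵀ C) *ᵥ u = lamAt • u)
    (hAtOnly : ∀ (μ : ℝ) (u : Fin nr ⊕ Fin nc → ℝ), u ≠ 0 →
      (Matrix.fromBlocks R B Bᵀ C) *ᵥ u = μ • u → μ = lamAt ∨ 0 < μ)
    (hCgNeg : lamCg < 0)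
    (hCgEig : ∃ w : Fin nr → ℝ, w ≠ 0 ∧ (R - B * C⁻¹ * Bᵀ) *ᵥ w = lamCg • w) :
    lamCg ≤ lamAt ∧ lamAt < 0 :=
  schur_neg_eigenvalue_le_general R B C hD hCinv lamAt lamCg hAtNeg hAtOnly hCgNeg hCgEig
end

section
/- Cauchy's interlacing theorem: if S is a symmetric n×n matrix with eigenvalues σ_1 ≤ ... ≤ σ_n and T is the leading principal m×m submatrix of S (m < n) with eigenvalues τ_1 ≤ ... ≤ τ_m, then σ_j ≤ τ_j ≤ σ_{n-m+j} for all 1 ≤ j ≤ m. -/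
/-!
On the span of eigenvectors whose eigenvalues are `≥ c` the Rayleigh quotient
`⟪S x, x⟫ / ‖x‖²` is `≥ c`, and on the span of eigenvectors whose eigenvalues are `≤ d` it is
`≤ d`. Extension by zero embeds `ℝᵐ` isometrically into `ℝⁿ` and carries the quadratic form of
`T` to that of `S`. The eigenvectors of `S` for `σ_j, …, σ_n` and the embedded eigenvectors of `T`
for `τ_1, …, τ_j` number `n + 1` in total, so their spans meet in a nonzero vector, whose Rayleigh
quotient is squeezed: `σ_j ≤ τ_j`. Counting the eigenvectors of `S` for `σ_1, …, σ_{n-m+j}`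
against those of `T` for `τ_j, …, τ_m` in the same way gives `τ_j ≤ σ_{n-m+j}`.
-/

open Matrix Module Submodule Function WithLp
open scoped InnerProductSpace

theorem LinearIndependent.finrank_span_image_finset {K V ι : Type*} [DivisionRing K]
    [AddCommGroup V] [Module K V] {v : ι → V} (hv : LinearIndependent K v) (s : Finset ι) :
    finrank K (span K (v '' s)) = s.card := by
  rw [Set.image_eq_range]
  exact (finrank_span_eq_card (hv.comp _ Subtype.val_injective)).trans (Fintype.card_coe s)

theorem exists_ne_zero_mem_span_image_of_finrank_lt {K V ι κ : Type*} [DivisionRing K]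
    [AddCommGroup V] [Module K V] [FiniteDimensional K V] {v : ι → V} {u : κ → V}
    (hv : LinearIndependent K v) (hu : LinearIndependent K u) {s : Finset ι} {t : Finset κ}
    (hst : finrank K V < s.card + t.card) :
    ∃ x ∈ span K (v '' s), x ∈ span K (u '' t) ∧ x ≠ 0 := by
  have : ¬ Disjoint (span K (v '' s)) (span K (u '' t)) := fun h => by
    have := finrank_add_finrank_le_of_disjoint h
    rw [hv.finrank_span_image_finset, hu.finrank_span_image_finset] at this
    omega
  simpa [disjoint_def] using this

section Rayleigh

variable {E : Type*} [NormedAddCommGroup E] [InnerProductSpace ℝ E] {ι : Type*}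
  {T : E →ₗ[ℝ] E} {v : ι → E} {μ : ι → ℝ}

theorem Orthonormal.inner_map_sum_smul_of_eigen [Fintype ι] (hv : Orthonormal ℝ v)
    (hT : ∀ i, T (v i) = μ i • v i) (c : ι → ℝ) :
    ⟪T (∑ i, c i • v i), ∑ i, c i • v i⟫_ℝ = ∑ i, μ i * c i ^ 2 := by
  simp only [map_sum, map_smul, hT, smul_smul, inner_sum, inner_smul_right,
    hv.inner_left_fintype]
  exact Finset.sum_congr rfl fun i _ => by rw [conj_trivial]; ring

theorem Orthonormal.norm_sum_smul_sq [Fintype ι] (hv : Orthonormal ℝ v) (c : ι → ℝ) :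
    ‖∑ i, c i • v i‖ ^ 2 = ∑ i, c i ^ 2 := by
  rw [← real_inner_self_eq_norm_sq]
  simp only [inner_sum, inner_smul_right, hv.inner_left_fintype]
  exact Finset.sum_congr rfl fun i _ => by rw [conj_trivial]; ring

theorem Orthonormal.inner_map_self_le_of_mem_span (hv : Orthonormal ℝ v)
    (hT : ∀ i, T (v i) = μ i • v i) {s : Finset ι} {d : ℝ} (hd : ∀ i ∈ s, μ i ≤ d) {x : E}
    (hx : x ∈ span ℝ (v '' s)) : ⟪T x, x⟫_ℝ ≤ d * ‖x‖ ^ 2 := by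
  obtain ⟨c, rfl⟩ := (mem_span_image_finset_iff_exists_fun ℝ).1 hx
  have hvs : Orthonormal ℝ fun i : s => v i := hv.comp _ Subtype.val_injective
  rw [hvs.inner_map_sum_smul_of_eigen (μ := fun i : s => μ i) (fun i => hT i) c,
    hvs.norm_sum_smul_sq, Finset.mul_sum]
  exact Finset.sum_le_sum fun i _ => mul_le_mul_of_nonneg_right (hd i i.2) (sq_nonneg _)

theorem Orthonormal.le_inner_map_self_of_mem_span (hv : Orthonormal ℝ v)
    (hT : ∀ i, T (v i) = μ i • v i) {s : Finset ι} {c : ℝ} (hc : ∀ i ∈ s, c ≤ μ i) {x : E}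
    (hx : x ∈ span ℝ (v '' s)) : c * ‖x‖ ^ 2 ≤ ⟪T x, x⟫_ℝ := by
  have := hv.inner_map_self_le_of_mem_span (T := -T) (μ := -μ) (by simp [hT])
    (fun i hi => neg_le_neg (hc i hi)) hx
  simp only [LinearMap.neg_apply, inner_neg_left] at this
  linarith

end Rayleigh

section Compression

variable {E F : Type*} [NormedAddCommGroup E] [InnerProductSpace ℝ E] [NormedAddCommGroup F]
  [InnerProductSpace ℝ F]

/-- Only the quadratic forms are compared; for self-adjoint `T` and `T'` this says `T' = J† T J`. -/
def LinearIsometry.IsCompression (J : F →ₗᵢ[ℝ] E) (T : E →ₗ[ℝ] E) (T' : F →ₗ[ℝ] F) : Prop :=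
  ∀ y, ⟪T (J y), J y⟫_ℝ = ⟪T' y, y⟫_ℝ

namespace LinearIsometry.IsCompression

variable [FiniteDimensional ℝ E] {J : F →ₗᵢ[ℝ] E} {T : E →ₗ[ℝ] E} {T' : F →ₗ[ℝ] F}
  {ι κ : Type*} {v : ι → E} {μ : ι → ℝ} {w : κ → F} {ν : κ → ℝ} {s : Finset ι} {t : Finset κ}
  {c d : ℝ}

theorem le_of_finrank_lt (hJ : IsCompression J T T') (hv : Orthonormal ℝ v)
    (hT : ∀ i, T (v i) = μ i • v i) (hw : Orthonormal ℝ w) (hT' : ∀ k, T' (w k) = ν k • w k)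
    (hst : finrank ℝ E < s.card + t.card) (hc : ∀ i ∈ s, c ≤ μ i) (hd : ∀ k ∈ t, ν k ≤ d) :
    c ≤ d := by
  obtain ⟨x, hxs, hxt, hx0⟩ := exists_ne_zero_mem_span_image_of_finrank_lt hv.linearIndependent
    (hw.comp_linearIsometry J).linearIndependent hst
  rw [Set.image_comp, ← J.coe_toLinearMap, span_image] at hxt
  obtain ⟨y, hyt, rfl⟩ := mem_map.1 hxt
  have hpos : 0 < ‖J y‖ ^ 2 := by positivity
  refine le_of_mul_le_mul_right ?_ hpos
  calc c * ‖J y‖ ^ 2 ≤ ⟪T (J y), J y⟫_ℝ := hv.le_inner_map_self_of_mem_span hT hc hxs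
    _ = ⟪T' y, y⟫_ℝ := hJ y
    _ ≤ d * ‖y‖ ^ 2 := hw.inner_map_self_le_of_mem_span hT' hd hyt
    _ = d * ‖J y‖ ^ 2 := by rw [J.norm_map]

theorem le_of_finrank_lt' (hJ : IsCompression J T T') (hv : Orthonormal ℝ v)
    (hT : ∀ i, T (v i) = μ i • v i) (hw : Orthonormal ℝ w) (hT' : ∀ k, T' (w k) = ν k • w k)
    (hst : finrank ℝ E < s.card + t.card) (hc : ∀ i ∈ s, μ i ≤ c) (hd : ∀ k ∈ t, d ≤ ν k) :
    d ≤ c := by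
  have hJneg : IsCompression J (-T) (-T') := fun y => by simp [hJ y]
  have := hJneg.le_of_finrank_lt hv (μ := -μ) (by simp [hT]) hw (ν := -ν) (by simp [hT']) hst
    (fun i hi => neg_le_neg (hc i hi)) (fun k hk => neg_le_neg (hd k hk))
  exact neg_le_neg_iff.1 this

end LinearIsometry.IsCompression

end Compression

section ExtendByZero

variable {ι κ : Type*} [Fintype ι] [Fintype κ] {f : κ → ι}

theorem Function.Injective.extend_zero_dotProduct {α : Type*} [NonUnitalNonAssocSemiring α]
    (hf : Injective f) (y : κ → α) (z : ι → α) :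
    extend f y 0 ⬝ᵥ z = y ⬝ᵥ (z ∘ f) :=
  (Fintype.sum_of_injective f hf _ _ (fun i hi => by simp [extend_apply' _ _ _ hi])
    (fun k => by simp [hf.extend_apply])).symm

theorem Function.Injective.dotProduct_extend_zero {α : Type*} [NonUnitalNonAssocSemiring α]
    (hf : Injective f) (y : κ → α) (z : ι → α) :
    z ⬝ᵥ extend f y 0 = (z ∘ f) ⬝ᵥ y :=
  (Fintype.sum_of_injective f hf _ _ (fun i hi => by simp [extend_apply' _ _ _ hi])
    (fun k => by simp [hf.extend_apply])).symm

theorem Function.Injective.mulVec_extend_zero {α : Type*} [NonUnitalNonAssocSemiring α]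
    (hf : Injective f) (A : Matrix ι ι α) (y : κ → α) :
    A *ᵥ extend f y 0 = A.submatrix id f *ᵥ y :=
  funext fun i => hf.dotProduct_extend_zero y (A i)

variable {𝕜 : Type*} [RCLike 𝕜]

noncomputable def EuclideanSpace.extendByZero (hf : Injective f) :
    EuclideanSpace 𝕜 κ →ₗᵢ[𝕜] EuclideanSpace 𝕜 ι :=
  LinearMap.isometryOfInner ((WithLp.linearEquiv 2 𝕜 (ι → 𝕜)).symm.toLinearMap ∘ₗ
      ExtendByZero.linearMap 𝕜 f ∘ₗ (WithLp.linearEquiv 2 𝕜 (κ → 𝕜)).toLinearMap)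
    fun x y => by
      change extend f (ofLp y) 0 ⬝ᵥ star (extend f (ofLp x) 0) = ofLp y ⬝ᵥ star (ofLp x)
      rw [hf.extend_zero_dotProduct]
      exact congrArg (ofLp y ⬝ᵥ star ·) (extend_comp hf _ _)

theorem EuclideanSpace.ofLp_extendByZero (hf : Injective f) (y : EuclideanSpace 𝕜 κ) :
    ofLp (extendByZero hf y) = extend f (ofLp y) 0 := rfl

theorem Matrix.isCompression_extendByZero_submatrix [DecidableEq ι] [DecidableEq κ]
    (hf : Injective f) (A : Matrix ι ι ℝ) :
    (EuclideanSpace.extendByZero hf).IsCompression (toEuclideanLin A)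
      (toEuclideanLin (A.submatrix f f)) := fun y => by
  simp only [EuclideanSpace.inner_eq_star_dotProduct, ofLp_toLpLin, toLin'_apply,
    EuclideanSpace.ofLp_extendByZero, hf.extend_zero_dotProduct, hf.mulVec_extend_zero]
  rfl

end ExtendByZero

theorem Matrix.IsHermitian.toEuclideanLin_eigenvectorBasis {𝕜 ι : Type*} [RCLike 𝕜] [Fintype ι]
    [DecidableEq ι] {A : Matrix ι ι 𝕜} (hA : A.IsHermitian) (i : ι) :
    toEuclideanLin A (hA.eigenvectorBasis i) = hA.eigenvalues i • hA.eigenvectorBasis i := by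
  rw [toLpLin_apply, hA.mulVec_eigenvectorBasis]
  rfl

/-- Cauchy's interlacing theorem: if `T` is the leading principal `m × m` submatrix of the
symmetric `n × n` matrix `S` (`m < n`), and `σ`, `τ` enumerate their eigenvalues in
nondecreasing order, then `σ j ≤ τ j ≤ σ (n - m + j)`. -/
theorem cauchy_interlacing {n m : ℕ} (hmn : m < n)
    (S : Matrix (Fin n) (Fin n) ℝ) (hS : S.IsHermitian)
    (hT : (S.submatrix (Fin.castLE hmn.le) (Fin.castLE hmn.le)).IsHermitian)
    (σ : Fin n → ℝ) (τ : Fin m → ℝ)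
    (hσmono : Monotone σ) (hτmono : Monotone τ)
    (hσ : ∃ e : Fin n ≃ Fin n, σ = hS.eigenvalues ∘ e)
    (hτ : ∃ e : Fin m ≃ Fin m, τ = hT.eigenvalues ∘ e) :
    ∀ j : Fin m,
      σ ⟨j.1, lt_trans j.2 hmn⟩ ≤ τ j ∧
      τ j ≤ σ ⟨n - m + j.1, by have := j.2; omega⟩ := by
  obtain ⟨eS, rfl⟩ := hσ
  obtain ⟨eT, rfl⟩ := hτ
  have hJ := isCompression_extendByZero_submatrix (Fin.castLE_injective hmn.le) S
  have hv := hS.eigenvectorBasis.orthonormal.comp eS eS.injective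
  have hw := hT.eigenvectorBasis.orthonormal.comp eT eT.injective
  have hSv i := hS.toEuclideanLin_eigenvectorBasis (eS i)
  have hTw k := hT.toEuclideanLin_eigenvectorBasis (eT k)
  have hcard {s : Finset (Fin n)} {t : Finset (Fin m)} (h : n < s.card + t.card) :
      finrank ℝ (EuclideanSpace ℝ (Fin n)) < s.card + t.card := by
    rwa [finrank_euclideanSpace_fin]
  intro j
  constructor
  · exact hJ.le_of_finrank_lt hv hSv hw hTw (s := Finset.Ici ⟨j, _⟩) (t := Finset.Iic j)
      (hcard (by simp only [Fin.card_Ici, Fin.card_Iic]; omega))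
      (fun i hi => hσmono (Finset.mem_Ici.1 hi)) (fun k hk => hτmono (Finset.mem_Iic.1 hk))
  · exact hJ.le_of_finrank_lt' hv hSv hw hTw (s := Finset.Iic ⟨n - m + j, _⟩)
      (t := Finset.Ici j) (hcard (by simp only [Fin.card_Ici, Fin.card_Iic]; omega))
      (fun i hi => hσmono (Finset.mem_Iic.1 hi)) (fun k hk => hτmono (Finset.mem_Ici.1 hk))
end

section
/- If u = (u_r, u_c) is an eigenvector of D = [[R, B], [B^T, C]] with eigenvalue λ < 0 and C is positive definite, then defining u_min := -C^{-1} B^T u_r, one has u_r · B (u_min - u_c) = -B^T u_r · (C^{-1} - (C - λ I)^{-1}) B^T u_r ≤ 0. -/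
/-!
The lower block of the eigenvalue equation reads `(C - λ) u_c = -Bᵀ u_r`, so
`u_c = -(C - λ)⁻¹ Bᵀ u_r` and the left-hand side is minus the quadratic form of
`C⁻¹ - (C - λ)⁻¹` at `Bᵀ u_r`. With `M = C - λ` one has
`C⁻¹ - M⁻¹ = M⁻¹ (M C⁻¹ M - M) M⁻¹ = M⁻¹ (-λ + λ² C⁻¹) M⁻¹`,
a congruence of a positive semidefinite matrix when `λ ≤ 0`.
-/

open Matrix

namespace Matrix

variable {n : Type*} [DecidableEq n]

lemma PosDef.sub_smul_one {C : Matrix n n ℝ} (hC : C.PosDef) {lam : ℝ} (hlam : lam ≤ 0) :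
    (C - lam • 1).PosDef := by
  rw [sub_eq_add_neg, ← neg_smul]
  exact hC.add_posSemidef (PosSemidef.one.smul (neg_nonneg.mpr hlam))

variable [Fintype n]

lemma inv_sub_inv_sub_smul_one {α : Type*} [CommRing α] {C : Matrix n n α} {lam : α}
    (hC : IsUnit C.det) (hM : IsUnit (C - lam • 1).det) :
    C⁻¹ - (C - lam • 1)⁻¹ =
      (C - lam • 1)⁻¹ * ((-lam) • 1 + lam ^ 2 • C⁻¹) * (C - lam • 1)⁻¹ := by
  set M := C - lam • 1 with hMdef
  have hMC : M * C⁻¹ = 1 - lam • C⁻¹ := by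
    rw [hMdef, sub_mul, mul_nonsing_inv _ hC, smul_mul, one_mul]
  have hmid : M * C⁻¹ * M - M = (-lam) • 1 + lam ^ 2 • C⁻¹ := by
    rw [hMC, hMdef, sub_mul, one_mul, smul_mul, mul_sub, nonsing_inv_mul _ hC, Matrix.mul_smul,
      mul_one, smul_sub, smul_smul, ← sq, neg_smul]
    abel
  rw [← hmid, mul_sub, sub_mul, Matrix.mul_assoc M, nonsing_inv_mul_cancel_left _ _ hM,
    mul_nonsing_inv_cancel_right _ _ hM, nonsing_inv_mul _ hM, one_mul]

lemma PosDef.posSemidef_inv_sub_inv_sub_smul_one {C : Matrix n n ℝ} (hC : C.PosDef) {lam : ℝ}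
    (hlam : lam ≤ 0) : (C⁻¹ - (C - lam • 1)⁻¹).PosSemidef := by
  have hM := hC.sub_smul_one hlam
  rw [inv_sub_inv_sub_smul_one ((isUnit_iff_isUnit_det _).mp hC.isUnit)
    ((isUnit_iff_isUnit_det _).mp hM.isUnit)]
  have hmid : ((-lam) • 1 + lam ^ 2 • C⁻¹ : Matrix n n ℝ).PosSemidef :=
    (PosSemidef.one.smul (neg_nonneg.mpr hlam)).add (hC.inv.posSemidef.smul (sq_nonneg lam))
  have := hmid.mul_mul_conjTranspose_same (C - lam • 1)⁻¹
  rwa [hM.inv.isHermitian.eq] at this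

lemma sub_smul_one_mulVec_of_fromBlocks_mulVec_eq_smul {l m α : Type*} [Fintype l] [Fintype m]
    [DecidableEq m] [CommRing α] {A : Matrix l l α} {B : Matrix l m α} {B' : Matrix m l α}
    {C : Matrix m m α} {lam : α} {x : l → α} {y : m → α}
    (h : fromBlocks A B B' C *ᵥ Sum.elim x y = lam • Sum.elim x y) :
    (C - lam • 1) *ᵥ y = -(B' *ᵥ x) := by
  have hy : B' *ᵥ x + C *ᵥ y = lam • y := by
    funext i
    simpa [fromBlocks_mulVec] using congrFun h (Sum.inr i)
  rw [sub_mulVec, smul_mulVec, one_mulVec, ← hy]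
  abel

end Matrix

theorem force_difference_nonpos_general {nr nc : ℕ}
    (R : Matrix (Fin nr) (Fin nr) ℝ) (B : Matrix (Fin nr) (Fin nc) ℝ)
    (C : Matrix (Fin nc) (Fin nc) ℝ)
    (hC : C.PosDef)
    (lam : ℝ) (hlam : lam < 0)
    (ur : Fin nr → ℝ) (uc : Fin nc → ℝ)
    (heig : (Matrix.fromBlocks R B Bᵀ C) *ᵥ (Sum.elim ur uc) =
      lam • Sum.elim ur uc) :
    ur ⬝ᵥ (B *ᵥ ((-(C⁻¹ *ᵥ (Bᵀ *ᵥ ur))) - uc)) =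
      -((Bᵀ *ᵥ ur) ⬝ᵥ ((C⁻¹ - (C - lam • 1)⁻¹) *ᵥ (Bᵀ *ᵥ ur))) ∧
    ur ⬝ᵥ (B *ᵥ ((-(C⁻¹ *ᵥ (Bᵀ *ᵥ ur))) - uc)) ≤ 0 := by
  have hM := hC.sub_smul_one hlam.le
  have huc : uc = -((C - lam • 1)⁻¹ *ᵥ (Bᵀ *ᵥ ur)) := by
    rw [← mulVec_neg, ← sub_smul_one_mulVec_of_fromBlocks_mulVec_eq_smul heig, mulVec_mulVec,
      nonsing_inv_mul _ ((isUnit_iff_isUnit_det _).mp hM.isUnit), one_mulVec]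
  have heq : ur ⬝ᵥ (B *ᵥ ((-(C⁻¹ *ᵥ (Bᵀ *ᵥ ur))) - uc)) =
      -((Bᵀ *ᵥ ur) ⬝ᵥ ((C⁻¹ - (C - lam • 1)⁻¹) *ᵥ (Bᵀ *ᵥ ur))) := by
    rw [← dotProduct_transpose_mulVec, dotProduct_comm, huc, sub_mulVec, dotProduct_sub,
      dotProduct_sub, dotProduct_neg, dotProduct_neg]
    ring
  refine ⟨heq, ?_⟩
  rw [heq, neg_nonpos]
  simpa using (hC.posSemidef_inv_sub_inv_sub_smul_one hlam.le).dotProduct_mulVec_nonneg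
    (Bᵀ *ᵥ ur)

/-- For an eigenvector `u = (u_r, u_c)` of `D` with eigenvalue `λ < 0` and `C` positive
definite, `u_r ⬝ B (u_min - u_c) = -(Bᵀ u_r) ⬝ (C⁻¹ - (C - λI)⁻¹) (Bᵀ u_r) ≤ 0`. -/
theorem force_difference_nonpos {nr nc : ℕ}
    (R : Matrix (Fin nr) (Fin nr) ℝ) (B : Matrix (Fin nr) (Fin nc) ℝ)
    (C : Matrix (Fin nc) (Fin nc) ℝ)
    (hR : R.IsSymm) (hC : C.PosDef)
    (lam : ℝ) (hlam : lam < 0)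
    (ur : Fin nr → ℝ) (uc : Fin nc → ℝ)
    (hu : Sum.elim ur uc ≠ 0)
    (heig : (Matrix.fromBlocks R B Bᵀ C) *ᵥ (Sum.elim ur uc) =
      lam • Sum.elim ur uc) :
    ur ⬝ᵥ (B *ᵥ ((-(C⁻¹ *ᵥ (Bᵀ *ᵥ ur))) - uc)) =
      -((Bᵀ *ᵥ ur) ⬝ᵥ ((C⁻¹ - (C - lam • 1)⁻¹) *ᵥ (Bᵀ *ᵥ ur))) ∧
    ur ⬝ᵥ (B *ᵥ ((-(C⁻¹ *ᵥ (Bᵀ *ᵥ ur))) - uc)) ≤ 0 :=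
  force_difference_nonpos_general R B C hC lam hlam ur uc heig
end

section
/- If D u = λ_at u for the unique negative eigenvalue λ_at of a symmetric matrix D = [[R, B], [B^T, C]] with C positive definite, and the Schur complement D_cg has a negative eigenvalue λ_cg equal to λ_at, then B(u_min - u_c) = 0, where u = (u_r, u_c) and u_min = -C^{-1} B^T u_r. Moreover u_r / ||u_r|| is an eigenvector of D_cg for λ_cg. -/
/-!
Put `d = C⁻¹ Bᵀ u_r + u_c = u_c - u_min`. The second block row of `D u = λ u` gives
`C d = λ u_c`, and the first gives `D_cg u_r = λ u_r - B d`. As `λ = λ_cg` is the least eigenvalue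
of the symmetric matrix `D_cg`,
`λ ‖u_r‖² ≤ u_rᵀ D_cg u_r = λ ‖u_r‖² - dᵀ C d + λ ‖u_c‖²`,
so `dᵀ C d ≤ λ ‖u_c‖² ≤ 0` and positive definiteness of `C` forces `d = 0`; hence
`D_cg u_r = λ u_r`.
Finally `u_r ≠ 0`, for otherwise `C u_c = λ u_c` with `λ < 0`.
-/

open Matrix

theorem fromBlocks_mulVec_sumElim_eq_smul_iff {m n α : Type*} [Fintype m] [Fintype n] [Semiring α]
    {A : Matrix m m α} {B : Matrix m n α} {C : Matrix n m α} {D : Matrix n n α} {c : α}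
    {x : m → α} {y : n → α} :
    fromBlocks A B C D *ᵥ Sum.elim x y = c • Sum.elim x y ↔
      A *ᵥ x + B *ᵥ y = c • x ∧ C *ᵥ x + D *ᵥ y = c • y := by
  simp [fromBlocks_mulVec, funext_iff, Sum.forall]

namespace Matrix

theorem PosDef.eq_zero_of_mulVec_eq_smul_of_nonpos {n : Type*} [Fintype n] {C : Matrix n n ℝ}
    (hC : C.PosDef) {c : ℝ} (hc : c ≤ 0) {y : n → ℝ} (hy : C *ᵥ y = c • y) : y = 0 := by
  by_contra hy0
  have hpos := hC.dotProduct_mulVec_pos hy0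
  have hyy := dotProduct_star_self_nonneg y
  rw [star_trivial] at hpos hyy
  rw [hy, dotProduct_smul, smul_eq_mul] at hpos
  nlinarith

theorem IsHermitian.mul_dotProduct_self_le_dotProduct_mulVec {n : Type*} [Fintype n]
    [DecidableEq n] {A : Matrix n n ℝ} (hA : A.IsHermitian) {c : ℝ}
    (hc : ∀ (μ : ℝ) (w : n → ℝ), w ≠ 0 → A *ᵥ w = μ • w → c ≤ μ) (x : n → ℝ) :
    c * (x ⬝ᵥ x) ≤ x ⬝ᵥ (A *ᵥ x) := by
  have hM : (A - c • 1).IsHermitian := hA.sub (by simp [IsHermitian])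
  have hpsd : (A - c • 1).PosSemidef := by
    refine hM.posSemidef_iff_eigenvalues_nonneg.mpr fun i => ?_
    have hv := hM.mulVec_eigenvectorBasis i
    rw [sub_mulVec, smul_mulVec, one_mulVec, sub_eq_iff_eq_add, ← add_smul] at hv
    have hv0 : (hM.eigenvectorBasis i).ofLp ≠ 0 := fun h =>
      hM.eigenvectorBasis.orthonormal.ne_zero i (by ext j; exact congrFun h j)
    have := hc _ _ hv0 hv
    simp only [Pi.zero_apply]
    linarith
  have := hpsd.dotProduct_mulVec_nonneg x
  rw [star_trivial, sub_mulVec, smul_mulVec, one_mulVec, dotProduct_sub, dotProduct_smul,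
    smul_eq_mul] at this
  linarith

theorem IsSymm.isHermitian_sub_mul_inv_mul_transpose {m n : Type*} [Fintype n] [DecidableEq n]
    {R : Matrix m m ℝ} {C : Matrix n n ℝ} (hR : R.IsSymm) (hC : C.IsHermitian)
    (B : Matrix m n ℝ) : (R - B * C⁻¹ * Bᵀ).IsHermitian :=
  (isHermitian_iff_isSymm.mpr hR).sub (isHermitian_mul_mul_conjTranspose B hC.inv)

section SchurComplement

variable {m n α : Type*} [Fintype m] [Fintype n] [DecidableEq n] [CommRing α]
  {R : Matrix m m α} {B : Matrix m n α} {C : Matrix n n α} {c : α} {x : m → α} {y : n → α}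

theorem sub_mul_inv_mul_transpose_mulVec (h : R *ᵥ x + B *ᵥ y = c • x) :
    (R - B * C⁻¹ * Bᵀ) *ᵥ x = c • x - B *ᵥ (C⁻¹ *ᵥ (Bᵀ *ᵥ x) + y) := by
  rw [← h, sub_mulVec, mulVec_add, ← mulVec_mulVec, ← mulVec_mulVec]
  abel

theorem mulVec_inv_mulVec_add (hC : IsUnit C.det) (h : Bᵀ *ᵥ x + C *ᵥ y = c • y) :
    C *ᵥ (C⁻¹ *ᵥ (Bᵀ *ᵥ x) + y) = c • y := by
  rw [mulVec_add, mulVec_mulVec, mul_nonsing_inv C hC, one_mulVec, h]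

end SchurComplement

theorem inv_mulVec_transpose_mulVec_add_eq_zero {m n : Type*} [Fintype m] [Fintype n]
    [DecidableEq n] {R : Matrix m m ℝ} {B : Matrix m n ℝ} {C : Matrix n n ℝ} (hC : C.PosDef)
    {c : ℝ} (hc : c ≤ 0) {x : m → ℝ} {y : n → ℝ}
    (h₁ : R *ᵥ x + B *ᵥ y = c • x) (h₂ : Bᵀ *ᵥ x + C *ᵥ y = c • y)
    (hS : c * (x ⬝ᵥ x) ≤ x ⬝ᵥ ((R - B * C⁻¹ * Bᵀ) *ᵥ x)) :
    C⁻¹ *ᵥ (Bᵀ *ᵥ x) + y = 0 := by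
  set d := C⁻¹ *ᵥ (Bᵀ *ᵥ x) + y
  have hCd : C *ᵥ d = c • y := mulVec_inv_mulVec_add hC.det_pos.ne'.isUnit h₂
  have hCsymm : Cᵀ = C := isHermitian_iff_isSymm.mp hC.1
  have hxBd : x ⬝ᵥ (B *ᵥ d) = d ⬝ᵥ (C *ᵥ d) - c * (y ⬝ᵥ y) := by
    calc x ⬝ᵥ (B *ᵥ d) = (c • y - C *ᵥ y) ⬝ᵥ d := by
          rw [dotProduct_mulVec, ← mulVec_transpose, ← h₂, add_sub_cancel_right]
      _ = c * (y ⬝ᵥ d) - y ⬝ᵥ (C *ᵥ d) := by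
          rw [sub_dotProduct, smul_dotProduct, smul_eq_mul, dotProduct_mulVec y,
            ← mulVec_transpose, hCsymm, dotProduct_comm]
      _ = d ⬝ᵥ (C *ᵥ d) - c * (y ⬝ᵥ y) := by
          rw [hCd, dotProduct_smul, dotProduct_smul, smul_eq_mul, smul_eq_mul, dotProduct_comm]
  rw [sub_mul_inv_mul_transpose_mulVec h₁, dotProduct_sub, dotProduct_smul, smul_eq_mul,
    hxBd] at hS
  by_contra hd
  have hdCd := hC.dotProduct_mulVec_pos hd
  have hyy := dotProduct_star_self_nonneg y
  rw [star_trivial] at hdCd hyy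
  nlinarith

end Matrix

theorem equal_eigenvalues_implies_force_zero_general {nr nc : ℕ}
    (R : Matrix (Fin nr) (Fin nr) ℝ) (B : Matrix (Fin nr) (Fin nc) ℝ)
    (C : Matrix (Fin nc) (Fin nc) ℝ)
    (hR : R.IsSymm) (hC : C.PosDef)
    (lamAt lamCg : ℝ)
    (ur : Fin nr → ℝ) (uc : Fin nc → ℝ)
    (hAtNeg : lamAt < 0)
    (hu : Sum.elim ur uc ≠ 0)
    (heig : (Matrix.fromBlocks R B Bᵀ C) *ᵥ (Sum.elim ur uc) =
      lamAt • Sum.elim ur uc)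
    (hCgOnly : ∀ (μ : ℝ) (w : Fin nr → ℝ), w ≠ 0 →
      (R - B * C⁻¹ * Bᵀ) *ᵥ w = μ • w → μ = lamCg ∨ 0 < μ)
    (heq : lamAt = lamCg) :
    B *ᵥ ((-(C⁻¹ *ᵥ (Bᵀ *ᵥ ur))) - uc) = 0 ∧
    ur ≠ 0 ∧
    (R - B * C⁻¹ * Bᵀ) *ᵥ ((Real.sqrt (ur ⬝ᵥ ur))⁻¹ • ur) =
      lamCg • ((Real.sqrt (ur ⬝ᵥ ur))⁻¹ • ur) := by
  obtain ⟨h₁, h₂⟩ := fromBlocks_mulVec_sumElim_eq_smul_iff.mp heig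
  have hur : ur ≠ 0 := by
    rintro rfl
    rw [mulVec_zero, zero_add] at h₂
    exact hu (by rw [hC.eq_zero_of_mulVec_eq_smul_of_nonpos hAtNeg.le h₂, Sum.elim_zero_zero])
  have hleast : ∀ (μ : ℝ) (w : Fin nr → ℝ), w ≠ 0 →
      (R - B * C⁻¹ * Bᵀ) *ᵥ w = μ • w → lamAt ≤ μ := fun μ w hw hμ => by
    rcases hCgOnly μ w hw hμ with h | h <;> linarith
  have hS := (hR.isHermitian_sub_mul_inv_mul_transpose hC.1 B)
    |>.mul_dotProduct_self_le_dotProduct_mulVec hleast ur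
  have hd := inv_mulVec_transpose_mulVec_add_eq_zero hC hAtNeg.le h₁ h₂ hS
  have hSur := sub_mul_inv_mul_transpose_mulVec (C := C) h₁
  rw [hd, mulVec_zero, sub_zero, heq] at hSur
  exact ⟨by rw [← neg_add', hd, neg_zero, mulVec_zero], hur, by rw [mulVec_smul, hSur, smul_comm]⟩

/-- If `λ_at = λ_cg`, then `B(u_min - u_c) = 0` and `u_r / ‖u_r‖` is an eigenvector of
`D_cg` for `λ_cg`. -/
theorem equal_eigenvalues_implies_force_zero {nr nc : ℕ}
    (R : Matrix (Fin nr) (Fin nr) ℝ) (B : Matrix (Fin nr) (Fin nc) ℝ)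
    (C : Matrix (Fin nc) (Fin nc) ℝ)
    (hR : R.IsSymm) (hC : C.PosDef)
    (lamAt lamCg : ℝ)
    (ur : Fin nr → ℝ) (uc : Fin nc → ℝ)
    (hAtNeg : lamAt < 0)
    (hu : Sum.elim ur uc ≠ 0)
    (hunit : (Sum.elim ur uc) ⬝ᵥ (Sum.elim ur uc) = 1)
    (heig : (Matrix.fromBlocks R B Bᵀ C) *ᵥ (Sum.elim ur uc) =
      lamAt • Sum.elim ur uc)
    (hAtOnly : ∀ (μ : ℝ) (w : Fin nr ⊕ Fin nc → ℝ), w ≠ 0 →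
      (Matrix.fromBlocks R B Bᵀ C) *ᵥ w = μ • w → μ = lamAt ∨ 0 < μ)
    (hCgNeg : lamCg < 0)
    (hCgEig : ∃ w : Fin nr → ℝ, w ≠ 0 ∧ (R - B * C⁻¹ * Bᵀ) *ᵥ w = lamCg • w)
    (hCgOnly : ∀ (μ : ℝ) (w : Fin nr → ℝ), w ≠ 0 →
      (R - B * C⁻¹ * Bᵀ) *ᵥ w = μ • w → μ = lamCg ∨ 0 < μ)
    (heq : lamAt = lamCg) :
    B *ᵥ ((-(C⁻¹ *ᵥ (Bᵀ *ᵥ ur))) - uc) = 0 ∧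
    ur ≠ 0 ∧
    (R - B * C⁻¹ * Bᵀ) *ᵥ ((Real.sqrt (ur ⬝ᵥ ur))⁻¹ • ur) =
      lamCg • ((Real.sqrt (ur ⬝ᵥ ur))⁻¹ • ur) :=
  equal_eigenvalues_implies_force_zero_general R B C hR hC lamAt lamCg ur uc hAtNeg hu heig hCgOnly
    heq
end
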